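/- There exists a unique point q' ∈ (q_B, 1) such that W(q') = μ. -/

import Mathlib

/-!
`W(q_B) = μ - R < μ` and `W(1) = h > μ`, so `W` takes the value `μ` on `(q_B, 1)` by the
intermediate value theorem. Since `k̃ > 1`, the exponents `a = (1 - k̃)/2 < 0` and
`b = (1 + k̃)/2 > 1` make `q ↦ q^a (1 - q)^b` strictly convex on `(0, 1)`; as `d_B > 0`,
`W` is strictly convex there too. A strictly convex function that is below `μ` at `q_B` can
cross the level `μ` only once to the right of `q_B`.
-/

set_option autoImplicit false

open Set

theorem hasDerivAt_rpow_mul_one_sub_rpow (a b : ℝ) {x : ℝ} (hx₀ : x ≠ 0) (hx₁ : x ≠ 1) :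
    HasDerivAt (fun q : ℝ => q ^ a * (1 - q) ^ b)
      (a * (x ^ (a - 1) * (1 - x) ^ b) - b * (x ^ a * (1 - x) ^ (b - 1))) x := by
  have hsub : HasDerivAt (fun q : ℝ => 1 - q) (-1) x := by
    simpa using (hasDerivAt_id x).const_sub 1
  have hprod : HasDerivAt (fun q : ℝ => q ^ a * (1 - q) ^ b)
      (a * x ^ (a - 1) * (1 - x) ^ b + x ^ a * (b * (1 - x) ^ (b - 1) * -1)) x :=
    (Real.hasDerivAt_rpow_const (Or.inl hx₀)).fun_mul
      ((Real.hasDerivAt_rpow_const (Or.inl (sub_ne_zero.2 hx₁.symm))).comp x hsub)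
  convert hprod using 1
  ring

theorem strictConvexOn_rpow_mul_one_sub_rpow {a b : ℝ} (ha : a < 0) (hb : 1 ≤ b) :
    StrictConvexOn ℝ (Ioo 0 1) fun q : ℝ => q ^ a * (1 - q) ^ b := by
  have hderiv : ∀ x ∈ Ioo (0 : ℝ) 1, HasDerivAt (fun q : ℝ => q ^ a * (1 - q) ^ b)
      (a * (x ^ (a - 1) * (1 - x) ^ b) - b * (x ^ a * (1 - x) ^ (b - 1))) x :=
    fun x hx => hasDerivAt_rpow_mul_one_sub_rpow a b hx.1.ne' hx.2.ne
  refine strictConvexOn_of_deriv2_pos (convex_Ioo 0 1)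
    (fun x hx => (hderiv x hx).continuousAt.continuousWithinAt) fun x hx => ?_
  rw [interior_Ioo] at hx
  obtain ⟨hx₀, hx₁⟩ := hx
  have hderiv_eq : deriv (fun q : ℝ => q ^ a * (1 - q) ^ b) =ᶠ[nhds x]
      fun q => a * (q ^ (a - 1) * (1 - q) ^ b) - b * (q ^ a * (1 - q) ^ (b - 1)) :=
    Filter.eventuallyEq_of_mem (isOpen_Ioo.mem_nhds ⟨hx₀, hx₁⟩) fun y hy =>
      (hderiv y hy).deriv
  have hderiv2 :=
    ((hasDerivAt_rpow_mul_one_sub_rpow (a - 1) b hx₀.ne' hx₁.ne).const_mul a).fun_sub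
    ((hasDerivAt_rpow_mul_one_sub_rpow a (b - 1) hx₀.ne' hx₁.ne).const_mul b)
  rw [Function.iterate_succ_apply, Function.iterate_one, hderiv_eq.deriv_eq, hderiv2.deriv]
  have hx₁' : 0 < 1 - x := by linarith
  have h₁ : 0 < x ^ (a - 1 - 1) * (1 - x) ^ b := by positivity
  have h₂ : 0 < x ^ (a - 1) * (1 - x) ^ (b - 1) := by positivity
  have h₃ : 0 < x ^ a * (1 - x) ^ (b - 1 - 1) := by positivity
  have hc₁ : 0 < a * (a - 1) := by nlinarith
  have hc₂ : 0 < -(a * b) := by nlinarith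
  have hc₃ : 0 ≤ b * (b - 1) := by nlinarith
  -- termwise: `g'' = a(a-1) x^(a-2) (1-x)^b - 2ab x^(a-1) (1-x)^(b-1) + b(b-1) x^a (1-x)^(b-2)`
  nlinarith [mul_pos hc₁ h₁, mul_pos hc₂ h₂, mul_nonneg hc₃ h₃.le]

theorem StrictConvexOn.affine_add_const_mul {s : Set ℝ} {f : ℝ → ℝ}
    (hf : StrictConvexOn ℝ s f) {d : ℝ} (hd : 0 < d) (u v : ℝ) :
    StrictConvexOn ℝ s fun x => x * u + (1 - x) * v + d * f x := by
  refine ⟨hf.1, fun x hx y hy hxy a b ha hb hab => ?_⟩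
  have hlt := mul_lt_mul_of_pos_left (hf.2 hx hy hxy ha hb hab) hd
  simp only [smul_eq_mul] at hlt ⊢
  have hb' : b = 1 - a := by linarith
  subst hb'
  linarith

theorem StrictConvexOn.existsUnique_mem_Ioo_eq {f : ℝ → ℝ} {a b c : ℝ} (hab : a ≤ b)
    (hcont : ContinuousOn f (Icc a b)) (hconv : StrictConvexOn ℝ (Ico a b) f)
    (hfa : f a < c) (hfb : c < f b) : ∃! x, x ∈ Ioo a b ∧ f x = c := by
  obtain ⟨x, hx, hfx⟩ := intermediate_value_Ioo hab hcont ⟨hfa, hfb⟩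
  refine ⟨x, ⟨hx, hfx⟩, ?_⟩
  have hcross :
      ∀ y z, y ∈ Ioo a b → z ∈ Ioo a b → y < z → f y = c → f z = c → False := by
    intro y z hy hz hyz hfy hfz
    have := hconv.lt_on_openSegment (left_mem_Ico.2 (hy.1.trans hy.2)) (Ioo_subset_Ico_self hz)
      (hy.1.trans hyz).ne (by rw [openSegment_eq_Ioo (hy.1.trans hyz)]; exact ⟨hy.1, hyz⟩)
    rw [hfy, hfz, max_eq_right hfa.le] at this
    exact this.false
  rintro y ⟨hy, hfy⟩
  rcases lt_trichotomy y x with hyx | rfl | hxy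
  · exact (hcross y x hy hx hyx hfy hfx).elim
  · rfl
  · exact (hcross x y hx hy hxy hfx hfy).elim

theorem pos_and_mul_lt_of_eq_div {m H c q : ℝ} (hm : 0 < m) (hmH : m < H) (hc : 0 < c)
    (hq : q = m * c / (H * (1 + c) - m)) : 0 < q ∧ q * H < m := by
  have hden : 0 < H * (1 + c) - m := by nlinarith
  subst hq
  refine ⟨by positivity, ?_⟩
  rw [div_mul_eq_mul_div, div_lt_iff₀ hden]
  nlinarith [mul_pos hm (sub_pos.2 hmH)]

theorem stmt_12_general (l μ h ρ σt R : ℝ)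
    (hμh : μ < h) (hρ : 0 < ρ) (hσt : 0 < σt)
    (hR : 0 < R) (hlR : l < μ - R)
    (kt qB dB : ℝ)
    (hkt : kt = Real.sqrt (1 + 8 * ρ * (σt / (h - l)) ^ 2))
    (hqB : qB = (l - μ + R) * ((1 - kt) / 2)
      / ((h - l) * ((1 + kt) / 2) + l - μ + R))
    (hdB : dB = (μ - R - qB * h - (1 - qB) * l)
      / (qB ^ ((1 - kt) / 2) * (1 - qB) ^ ((1 + kt) / 2)))
    (W : ℝ → ℝ)
    (hW : ∀ q : ℝ, W q = q * h + (1 - q) * l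
      + dB * q ^ ((1 - kt) / 2) * (1 - q) ^ ((1 + kt) / 2)) :
    ∃! q' : ℝ, q' ∈ Set.Ioo qB 1 ∧ W q' = μ := by
  have hkt₁ : 1 < kt := by
    rw [hkt, Real.lt_sqrt zero_le_one]
    have : 0 < σt / (h - l) := div_pos hσt (by linarith)
    nlinarith [pow_pos this 2]
  obtain ⟨hqB₀, hqB_lt⟩ := pos_and_mul_lt_of_eq_div (m := μ - R - l) (H := h - l)
    (c := (kt - 1) / 2) (q := qB) (by linarith) (by linarith) (by linarith)
    (by rw [hqB]; congr 1 <;> ring)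
  have hqB₁ : qB < 1 := by nlinarith
  have hX : 0 < qB ^ ((1 - kt) / 2) * (1 - qB) ^ ((1 + kt) / 2) := by
    have : 0 < 1 - qB := by linarith
    positivity
  have hdB₀ : 0 < dB := by
    rw [hdB]; exact div_pos (by linarith) hX
  have hW_qB : W qB = μ - R := by
    rw [hW, mul_assoc dB, hdB, div_mul_cancel₀ _ hX.ne']; ring
  have hW_one : W 1 = h := by
    simp [hW, Real.zero_rpow (by linarith : (1 + kt) / 2 ≠ 0)]
  have hcont : ContinuousOn W (Icc qB 1) := fun x hx => by
    have : x ≠ 0 := (hqB₀.trans_le hx.1).ne'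
    rw [funext hW]
    apply ContinuousAt.continuousWithinAt
    fun_prop (disch := first | exact Or.inl this | exact Or.inr (by linarith))
  have hconv : StrictConvexOn ℝ (Ioo 0 1) W := by
    convert (strictConvexOn_rpow_mul_one_sub_rpow (a := (1 - kt) / 2) (b := (1 + kt) / 2)
      (by linarith) (by linarith)).affine_add_const_mul hdB₀ h l using 1
    exact funext fun q => by rw [hW, mul_assoc]
  exact (hconv.subset (Ico_subset_Ioo_left hqB₀) (convex_Ico qB 1)).existsUnique_mem_Ioo_eq
    hqB₁.le hcont (by linarith) (by linarith)

/-- There exists a unique point `q' ∈ (q_B, 1)` with `W(q') = μ`. -/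
theorem stmt_12 (l μ h ρ σt R : ℝ)
    (hl : 0 < l) (hlμ : l < μ) (hμh : μ < h) (hρ : 0 < ρ) (hσt : 0 < σt)
    (hR : 0 < R) (hlR : l < μ - R)
    (kt qB dB : ℝ)
    (hkt : kt = Real.sqrt (1 + 8 * ρ * (σt / (h - l)) ^ 2))
    (hqB : qB = (l - μ + R) * ((1 - kt) / 2)
      / ((h - l) * ((1 + kt) / 2) + l - μ + R))
    (hdB : dB = (μ - R - qB * h - (1 - qB) * l)
      / (qB ^ ((1 - kt) / 2) * (1 - qB) ^ ((1 + kt) / 2)))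
    (W : ℝ → ℝ)
    (hW : ∀ q : ℝ, W q = q * h + (1 - q) * l
      + dB * q ^ ((1 - kt) / 2) * (1 - q) ^ ((1 + kt) / 2)) :
    ∃! q' : ℝ, q' ∈ Set.Ioo qB 1 ∧ W q' = μ :=
  stmt_12_general l μ h ρ σt R hμh hρ hσt hR hlR kt qB dB hkt hqB hdB W hW
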